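/- The inverse Mills ratio ε(ξ) = φ(ξ)/Φ(ξ) satisfies 0 < ξ·ε(ξ) + ε(ξ)² < 1 for all ξ ∈ ℝ. -/

import Mathlib

/-!
Write `φ`, `Φ` for the standard normal density and distribution function and `ε = φ / Φ`.
Then `ξ ε + ε² = φ (ξ Φ + φ) / Φ²`, and `ξ ε + ε² < 1` amounts to `ξ φ Φ + φ² < Φ²`.
The three functions `F = ξ Φ + φ`, `H = (1 + ξ²) Φ + ξ φ` and `G = Φ² - ξ φ Φ - φ²` all tend
to `0` at `-∞`, since `Φ ≤ φ` for `ξ ≤ -1` and `φ` decays faster than any power; their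
derivatives are `F' = Φ`, `H' = 2 F` and `G' = φ H`. So `Φ`, `F`, `H` and `G` are positive in turn.
-/

open MeasureTheory Real

noncomputable def stdNormalPDF (x : ℝ) : ℝ := Real.exp (-x ^ 2 / 2) / Real.sqrt (2 * Real.pi)

noncomputable def stdNormalCDF (x : ℝ) : ℝ := ∫ t in Set.Iic x, stdNormalPDF t

open Filter Set Topology

theorem hasDerivAt_integral_Iic {E : Type*} [NormedAddCommGroup E] [NormedSpace ℝ E]
    [CompleteSpace E] {f : ℝ → E} (hf : Integrable f) (hc : Continuous f) (x : ℝ) :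
    HasDerivAt (fun u => ∫ t in Iic u, f t) (f x) x := by
  have h := (intervalIntegral.integral_hasDerivAt_right (a := 0) (b := x) hf.intervalIntegrable
    hc.stronglyMeasurable.stronglyMeasurableAtFilter hc.continuousAt).const_add
    (∫ t in Iic 0, f t)
  refine h.congr_of_eventuallyEq (Eventually.of_forall fun u => ?_)
  dsimp only
  rw [← intervalIntegral.integral_Iic_sub_Iic hf.integrableOn hf.integrableOn]
  abel

theorem pos_of_hasDerivAt_pos_of_tendsto_atBot {F F' : ℝ → ℝ} (hF : ∀ x, HasDerivAt F (F' x) x)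
    (hF' : ∀ x, 0 < F' x) (h0 : Tendsto F atBot (𝓝 0)) (x : ℝ) : 0 < F x :=
  have hmono := strictMono_of_hasDerivAt_pos hF hF'
  (hmono.monotone.le_of_tendsto h0 (x - 1)).trans_lt (hmono (sub_one_lt x))

theorem stdNormalPDF_eq_inv_sqrt_mul_exp : stdNormalPDF = fun x => (√(2 * π))⁻¹ * exp (-(1 / 2) * x ^ 2) := by
  ext x
  rw [stdNormalPDF, div_eq_inv_mul]
  ring_nf

theorem stdNormalPDF_pos (x : ℝ) : 0 < stdNormalPDF x := by
  unfold stdNormalPDF; positivity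

theorem continuous_stdNormalPDF : Continuous stdNormalPDF := by
  unfold stdNormalPDF; fun_prop

theorem integrable_stdNormalPDF : Integrable stdNormalPDF := by
  simpa only [stdNormalPDF_eq_inv_sqrt_mul_exp] using
    (integrable_exp_neg_mul_sq (by norm_num : (0 : ℝ) < 1 / 2)).const_mul (√(2 * π))⁻¹

theorem integrable_mul_stdNormalPDF : Integrable fun x => x * stdNormalPDF x := by
  simpa only [stdNormalPDF_eq_inv_sqrt_mul_exp, mul_left_comm] using
    (integrable_mul_exp_neg_mul_sq (by norm_num : (0 : ℝ) < 1 / 2)).const_mul (√(2 * π))⁻¹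

theorem integrable_neg_mul_stdNormalPDF : Integrable fun x => -x * stdNormalPDF x := by
  simpa only [neg_mul] using integrable_mul_stdNormalPDF.fun_neg

theorem hasDerivAt_stdNormalPDF (x : ℝ) : HasDerivAt stdNormalPDF (-x * stdNormalPDF x) x := by
  have hexponent : HasDerivAt (fun y => -y ^ 2 / 2) (-x) x := by
    refine (((hasDerivAt_pow 2 x).neg).div_const 2).congr_deriv ?_
    push_cast
    ring
  have hderiv : -x * stdNormalPDF x = exp (-x ^ 2 / 2) * (-x) / √(2 * π) := by
    unfold stdNormalPDF
    ring
  rw [hderiv]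
  exact hexponent.exp.div_const _

theorem tendsto_pow_mul_stdNormalPDF_cocompact (k : ℕ) :
    Tendsto (fun x => x ^ k * stdNormalPDF x) (cocompact ℝ) (𝓝 0) := by
  have h := (tendsto_rpow_abs_mul_exp_neg_mul_sq_cocompact
    (by norm_num : (0 : ℝ) < 1 / 2) k).const_mul (√(2 * π))⁻¹
  rw [mul_zero] at h
  refine squeeze_zero_norm (fun x => le_of_eq ?_) h
  rw [norm_mul, norm_pow, Real.norm_eq_abs, Real.norm_of_nonneg (stdNormalPDF_pos x).le,
    stdNormalPDF_eq_inv_sqrt_mul_exp, Real.rpow_natCast]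
  ring

theorem tendsto_pow_mul_stdNormalPDF_atBot (k : ℕ) :
    Tendsto (fun x => x ^ k * stdNormalPDF x) atBot (𝓝 0) :=
  (tendsto_pow_mul_stdNormalPDF_cocompact k).mono_left atBot_le_cocompact

theorem tendsto_stdNormalPDF_atBot : Tendsto stdNormalPDF atBot (𝓝 0) := by
  simpa using tendsto_pow_mul_stdNormalPDF_atBot 0

theorem integral_Iic_neg_mul_stdNormalPDF (a : ℝ) :
    ∫ t in Iic a, -t * stdNormalPDF t = stdNormalPDF a := by
  simpa using integral_Iic_of_hasDerivAt_of_tendsto' (fun x _ => hasDerivAt_stdNormalPDF x)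
    integrable_neg_mul_stdNormalPDF.integrableOn tendsto_stdNormalPDF_atBot

theorem stdNormalCDF_nonneg (x : ℝ) : 0 ≤ stdNormalCDF x :=
  setIntegral_nonneg measurableSet_Iic fun t _ => (stdNormalPDF_pos t).le

theorem stdNormalCDF_le_stdNormalPDF {a : ℝ} (ha : a ≤ -1) : stdNormalCDF a ≤ stdNormalPDF a := by
  rw [← integral_Iic_neg_mul_stdNormalPDF a]
  refine setIntegral_mono_on integrable_stdNormalPDF.integrableOn
    integrable_neg_mul_stdNormalPDF.integrableOn measurableSet_Iic fun t ht => ?_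
  have ht : 1 ≤ -t := by linarith [mem_Iic.1 ht]
  simpa using mul_le_mul_of_nonneg_right ht (stdNormalPDF_pos t).le

theorem hasDerivAt_stdNormalCDF (x : ℝ) : HasDerivAt stdNormalCDF (stdNormalPDF x) x :=
  hasDerivAt_integral_Iic integrable_stdNormalPDF continuous_stdNormalPDF x

theorem tendsto_pow_mul_stdNormalCDF_atBot (k : ℕ) :
    Tendsto (fun x => x ^ k * stdNormalCDF x) atBot (𝓝 0) := by
  refine squeeze_zero_norm' ?_
    (tendsto_zero_iff_norm_tendsto_zero.1 (tendsto_pow_mul_stdNormalPDF_atBot k))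
  filter_upwards [eventually_le_atBot (-1)] with x hx
  rw [norm_mul, norm_mul, Real.norm_of_nonneg (stdNormalCDF_nonneg x),
    Real.norm_of_nonneg (stdNormalPDF_pos x).le]
  exact mul_le_mul_of_nonneg_left (stdNormalCDF_le_stdNormalPDF hx) (norm_nonneg _)

theorem tendsto_stdNormalCDF_atBot : Tendsto stdNormalCDF atBot (𝓝 0) := by
  simpa using tendsto_pow_mul_stdNormalCDF_atBot 0

theorem stdNormalCDF_pos (x : ℝ) : 0 < stdNormalCDF x :=
  pos_of_hasDerivAt_pos_of_tendsto_atBot hasDerivAt_stdNormalCDF stdNormalPDF_pos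
    tendsto_stdNormalCDF_atBot x

theorem mul_stdNormalCDF_add_stdNormalPDF_pos (x : ℝ) :
    0 < x * stdNormalCDF x + stdNormalPDF x := by
  refine pos_of_hasDerivAt_pos_of_tendsto_atBot
    (F := fun y => y * stdNormalCDF y + stdNormalPDF y) (fun y => ?_) stdNormalCDF_pos ?_ x
  · exact (((hasDerivAt_id' y).mul (hasDerivAt_stdNormalCDF y)).add
      (hasDerivAt_stdNormalPDF y)).congr_deriv (by ring)
  · simpa using (tendsto_pow_mul_stdNormalCDF_atBot 1).add tendsto_stdNormalPDF_atBot

theorem one_add_sq_mul_stdNormalCDF_add_mul_stdNormalPDF_pos (x : ℝ) :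
    0 < (1 + x ^ 2) * stdNormalCDF x + x * stdNormalPDF x := by
  refine pos_of_hasDerivAt_pos_of_tendsto_atBot
    (F := fun y => (1 + y ^ 2) * stdNormalCDF y + y * stdNormalPDF y)
    (F' := fun y => 2 * (y * stdNormalCDF y + stdNormalPDF y)) (fun y => ?_)
    (fun y => mul_pos two_pos (mul_stdNormalCDF_add_stdNormalPDF_pos y)) ?_ x
  · exact ((((hasDerivAt_pow 2 y).const_add 1).mul (hasDerivAt_stdNormalCDF y)).add
      ((hasDerivAt_id' y).mul (hasDerivAt_stdNormalPDF y))).congr_deriv (by push_cast; ring)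
  · simpa [add_mul] using (tendsto_stdNormalCDF_atBot.add
      (tendsto_pow_mul_stdNormalCDF_atBot 2)).add (tendsto_pow_mul_stdNormalPDF_atBot 1)

theorem mul_stdNormalPDF_mul_stdNormalCDF_add_sq_lt_sq (x : ℝ) :
    x * stdNormalPDF x * stdNormalCDF x + stdNormalPDF x ^ 2 < stdNormalCDF x ^ 2 := by
  rw [← sub_pos]
  refine pos_of_hasDerivAt_pos_of_tendsto_atBot
    (F := fun y => stdNormalCDF y ^ 2 - (y * stdNormalPDF y * stdNormalCDF y + stdNormalPDF y ^ 2))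
    (F' := fun y => stdNormalPDF y * ((1 + y ^ 2) * stdNormalCDF y + y * stdNormalPDF y))
    (fun y => ?_) (fun y => mul_pos (stdNormalPDF_pos y)
      (one_add_sq_mul_stdNormalCDF_add_mul_stdNormalPDF_pos y)) ?_ x
  · exact (((hasDerivAt_stdNormalCDF y).pow 2).sub
      ((((hasDerivAt_id' y).mul (hasDerivAt_stdNormalPDF y)).mul (hasDerivAt_stdNormalCDF y)).add
        ((hasDerivAt_stdNormalPDF y).pow 2))).congr_deriv
          (by simp only [Pi.mul_apply]; push_cast; ring)
  · simpa [sq] using (tendsto_stdNormalCDF_atBot.mul tendsto_stdNormalCDF_atBot).sub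
      (((tendsto_pow_mul_stdNormalPDF_atBot 1).mul tendsto_stdNormalCDF_atBot).add
        (tendsto_stdNormalPDF_atBot.mul tendsto_stdNormalPDF_atBot))

/-- `0 < ξ·ε(ξ) + ε(ξ)² < 1` for all `ξ ∈ ℝ`, where `ε = φ/Φ`. -/
theorem stmt_7 (ξ : ℝ) :
    0 < ξ * (stdNormalPDF ξ / stdNormalCDF ξ) + (stdNormalPDF ξ / stdNormalCDF ξ) ^ 2 ∧
      ξ * (stdNormalPDF ξ / stdNormalCDF ξ) + (stdNormalPDF ξ / stdNormalCDF ξ) ^ 2 < 1 := by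
  have hΦ := stdNormalCDF_pos ξ
  have key : ξ * (stdNormalPDF ξ / stdNormalCDF ξ) + (stdNormalPDF ξ / stdNormalCDF ξ) ^ 2
      = stdNormalPDF ξ * (ξ * stdNormalCDF ξ + stdNormalPDF ξ) / stdNormalCDF ξ ^ 2 := by
    field_simp
  rw [key, div_lt_one (by positivity)]
  constructor
  · exact div_pos (mul_pos (stdNormalPDF_pos ξ) (mul_stdNormalCDF_add_stdNormalPDF_pos ξ))
      (by positivity)
  · linarith [mul_stdNormalPDF_mul_stdNormalCDF_add_sq_lt_sq ξ]
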